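/- arXiv:1909.09407 — 7 statements merged into one kernel-verified Lean document; each statement's English description precedes it below -/
import Mathlib

section
/- A ceer R is self-full if and only if R ⊕ Id₁ is not computably reducible to R, where Id₁ is the equivalence relation on ℕ with exactly one class. -/
/-- `f` is a computable reduction from `R` to `S`. -/
def CReduction (f : ℕ → ℕ) (R S : ℕ → ℕ → Prop) : Prop :=
  Computable f ∧ ∀ x y, R x y ↔ S (f x) (f y)

/-- `R` is computably reducible to `S`. -/
def Reduces (R S : ℕ → ℕ → Prop) : Prop := ∃ f, CReduction f R S

/-- A ceer: a computably enumerable equivalence relation on ℕ. -/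
def Ceer (R : ℕ → ℕ → Prop) : Prop :=
  Equivalence R ∧ REPred fun p : ℕ × ℕ => R p.1 p.2

/-- `R` is self-full: every computable self-reduction has range meeting every class. -/
def SelfFull (R : ℕ → ℕ → Prop) : Prop :=
  ∀ f, CReduction f R R → ∀ y, ∃ x, R (f x) y

/-- Uniform join `R ⊕ S`: evens code `R`, odds code `S`. -/
def join (R S : ℕ → ℕ → Prop) : ℕ → ℕ → Prop :=
  fun a b => (∃ x y, a = 2*x ∧ b = 2*y ∧ R x y) ∨
             (∃ x y, a = 2*x+1 ∧ b = 2*y+1 ∧ S x y)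

/-- A Π⁰₁ relation: the complement is c.e. -/
def Pi01 (C : ℕ → ℕ → Prop) : Prop :=
  REPred fun p : ℕ × ℕ => ¬ C p.1 p.2

/-- `R` has infinitely many equivalence classes. -/
def InfiniteClasses (R : ℕ → ℕ → Prop) : Prop :=
  ∀ l : List ℕ, ∃ x, ∀ y ∈ l, ¬ R x y

/-- `R` has only finitely many equivalence classes. -/
def FiniteClasses (R : ℕ → ℕ → Prop) : Prop :=
  ∃ l : List ℕ, ∀ x, ∃ y ∈ l, R x y

/-- `X` is co-ceer-resistant. -/
def CoCeerResistant (X : ℕ → ℕ → Prop) : Prop :=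
  ∀ C : ℕ → ℕ → Prop, Equivalence C → Pi01 C → InfiniteClasses C →
    ∃ x y, X x y ∧ ¬ C x y

/-- `X` is hereditarily self-full. -/
def HSF (X : ℕ → ℕ → Prop) : Prop :=
  ∀ Y, Ceer Y → SelfFull Y → SelfFull (join X Y)

/-- `IdN n` is a ceer with exactly `n + 1` classes; so `IdN (n-1)` plays the role of `Idₙ` for `n ≥ 1`. -/
def IdN (n : ℕ) : ℕ → ℕ → Prop := fun x y => min x n = min y n

/-- A universal ceer: every ceer reduces to it. -/
def Universal (U : ℕ → ℕ → Prop) : Prop := ∀ R, Ceer R → Reduces R U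

/-- The Π⁰₁ equivalence relation `∼ᶠ` induced by a self-reduction `f` of a uniform join. -/
def simF (f : ℕ → ℕ) : ℕ → ℕ → Prop :=
  fun n m => ∀ k, (Even (f^[k] (2*n)) ↔ Even (f^[k] (2*m)))

/-- A sequence is eventually periodic. -/
def EventuallyPeriodic (τ : ℕ → Bool) : Prop :=
  ∃ N p, 0 < p ∧ ∀ k, N ≤ k → τ (k + p) = τ k


/-!
A self-reduction `g` of `R` whose range misses the class of `c` extends to a reduction of
`R ⊕ Id₁` to `R` by sending `2x` to `g x` and every odd number to `c`. Conversely, if `f` reduces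
`R ⊕ Id₁` to `R`, then `x ↦ f (2x)` is a self-reduction of `R` whose range misses the class
of `f 1`.
-/

section Join

variable {R S : ℕ → ℕ → Prop} {x y : ℕ}

theorem join_even_even : join R S (2 * x) (2 * y) ↔ R x y := by
  constructor
  · rintro (⟨a, b, ha, hb, h⟩ | ⟨a, b, ha, hb, -⟩)
    · obtain rfl : a = x := by omega
      obtain rfl : b = y := by omega
      exact h
    · omega
  · exact fun h => Or.inl ⟨x, y, rfl, rfl, h⟩

theorem join_odd_odd : join R S (2 * x + 1) (2 * y + 1) ↔ S x y := by
  constructor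
  · rintro (⟨a, b, ha, hb, -⟩ | ⟨a, b, ha, hb, h⟩)
    · omega
    · obtain rfl : a = x := by omega
      obtain rfl : b = y := by omega
      exact h
  · exact fun h => Or.inr ⟨x, y, rfl, rfl, h⟩

theorem not_join_even_odd : ¬ join R S (2 * x) (2 * y + 1) := by
  rintro (⟨a, b, ha, hb, -⟩ | ⟨a, b, ha, hb, -⟩) <;> omega

theorem not_join_odd_even : ¬ join R S (2 * x + 1) (2 * y) := by
  rintro (⟨a, b, ha, hb, -⟩ | ⟨a, b, ha, hb, -⟩) <;> omega

end Join

theorem CReduction.comp_double {f : ℕ → ℕ} {R S T : ℕ → ℕ → Prop}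
    (hf : CReduction f (join R S) T) : CReduction (fun x => f (2 * x)) R T :=
  ⟨hf.1.comp (Primrec.nat_mul.comp (.const 2) .id).to_comp,
    fun _ _ => join_even_even.symm.trans (hf.2 _ _)⟩

def evenCases (g : ℕ → ℕ) (c : ℕ) (n : ℕ) : ℕ := if n % 2 = 0 then g (n / 2) else c

@[simp] theorem evenCases_double (g : ℕ → ℕ) (c x : ℕ) : evenCases g c (2 * x) = g x := by
  simp [evenCases]

@[simp] theorem evenCases_double_add_one (g : ℕ → ℕ) (c x : ℕ) :
    evenCases g c (2 * x + 1) = c := by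
  simp [evenCases]

theorem Computable.evenCases {g : ℕ → ℕ} (hg : Computable g) (c : ℕ) :
    Computable (evenCases g c) := by
  have h := Computable.cond
    (Primrec.eq.comp (Primrec.nat_mod.comp .id (.const 2)) (.const 0)).decide.to_comp
    (hg.comp (Primrec.nat_div.comp .id (.const 2)).to_comp) (Computable.const c)
  convert h using 2 with n
  simp [_root_.evenCases, Bool.cond_decide]

theorem CReduction.join_top {g : ℕ → ℕ} {R T : ℕ → ℕ → Prop} (hT : Equivalence T)
    (hg : CReduction g R T) {c : ℕ} (hc : ∀ x, ¬ T (g x) c) :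
    CReduction (evenCases g c) (join R fun _ _ => True) T := by
  refine ⟨hg.1.evenCases c, fun a b => ?_⟩
  rcases Nat.even_or_odd' a with ⟨x, rfl | rfl⟩ <;>
    rcases Nat.even_or_odd' b with ⟨y, rfl | rfl⟩
  · simpa [join_even_even] using hg.2 x y
  · simpa [not_join_even_odd] using hc x
  · simpa [not_join_odd_even] using fun h => hc y (hT.symm h)
  · simpa [join_odd_odd] using hT.refl c

/-- A ceer `R` is self-full iff `R ⊕ Id₁ ≰ R`, where `Id₁` relates all naturals. -/
theorem stmt0 (R : ℕ → ℕ → Prop) (hR : Ceer R) :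
    SelfFull R ↔ ¬ Reduces (join R (fun _ _ => True)) R := by
  constructor
  · rintro hSF ⟨f, hf⟩
    obtain ⟨x, hx⟩ := hSF _ hf.comp_double (f 1)
    exact not_join_even_odd (y := 0) ((hf.2 (2 * x) 1).mpr hx)
  · intro hnot g hg c
    by_contra! hmiss
    exact hnot ⟨_, hg.join_top hR.1 hmiss⟩
end

section
/- If C is a Π⁰₁ equivalence relation on ℕ with infinitely many equivalence classes, then the identity relation Id on ℕ is computably reducible to C. -/
/-!
Since the complement of `C` is c.e., for a finite list `l` one can effectively search for a
number `x` together with a stage by which `¬ C x y` has been enumerated for every `y ∈ l`; such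
an `x` exists because `C` has infinitely many classes. Iterating this search, starting from the
empty list and feeding back everything chosen so far, yields a computable sequence of pairwise
`C`-inequivalent numbers, i.e. a reduction of `Id` to `C`.
-/

open Nat.Partrec.Code Encodable Filter

namespace REPred

variable {α β : Type*} [Primcodable α] [Primcodable β]

theorem exists_primrecRel_stage {p : α → Prop} (hp : REPred p) :
    ∃ T : α → ℕ → Prop, PrimrecRel T ∧ (∀ a, Monotone (T a)) ∧
      ∀ a, p a ↔ ∃ k, T a k := by
  obtain ⟨c, hc⟩ := exists_code.1 hp
  refine ⟨fun a k => (evaln k c (encode a)).isSome, ?_, fun a k k' hk h => ?_, fun a => ?_⟩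
  · refine Primrec.primrecPred ((Primrec.option_isSome.comp (primrec_evaln.comp
      ((Primrec.snd.pair (Primrec.const c)).pair (Primrec.encode.comp Primrec.fst)))).of_eq ?_)
    simp
  · obtain ⟨x, hx⟩ := Option.isSome_iff_exists.1 h
    exact Option.isSome_iff_exists.2 ⟨x, evaln_mono hk hx⟩
  · calc p a ↔ ∃ x, x ∈ eval c (encode a) := by simp [hc]
      _ ↔ ∃ k x, x ∈ evaln k c (encode a) := by simp only [evaln_complete]; exact exists_comm
      _ ↔ ∃ k, (evaln k c (encode a)).isSome := by simp [Option.isSome_iff_exists]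

theorem of_exists_primrecRel {T : α → ℕ → Prop} (hT : PrimrecRel T) :
    REPred fun a => ∃ k, T a k := by
  classical
  refine (Partrec.rfind (hT.decide.to_comp.partrec₂)).dom_re.of_eq fun a => ?_
  simp [Nat.rfind_dom]

theorem forall_mem_list {r : α → β → Prop} (hr : REPred fun q : α × β => r q.1 q.2) :
    REPred fun q : List β × α => ∀ b ∈ q.1, r q.2 b := by
  obtain ⟨T, hT, hmono, hrT⟩ := hr.exists_primrecRel_stage
  have hR : PrimrecRel fun (b : β) (q : α × ℕ) => T (q.1, b) q.2 :=
    hT.comp ((Primrec.fst.comp Primrec.snd).pair Primrec.fst) (Primrec.snd.comp Primrec.snd)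
  have hT' : PrimrecRel fun (q : List β × α) k => ∀ b ∈ q.1, T (q.2, b) k :=
    hR.forall_mem_list.comp (Primrec.fst.comp Primrec.fst)
      ((Primrec.snd.comp Primrec.fst).pair Primrec.snd)
  refine (of_exists_primrecRel hT').of_eq fun q => ⟨?_, fun h => ?_⟩
  · rintro ⟨k, hk⟩ b hb
    exact (hrT (q.2, b)).2 ⟨k, hk b hb⟩
  · -- the stages are monotone, so finitely many witnesses have a common stage
    have hev : ∀ b ∈ q.1, ∀ᶠ k in atTop, T (q.2, b) k := fun b hb => by
      obtain ⟨k, hk⟩ := (hrT (q.2, b)).1 (h b hb)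
      exact eventually_atTop.2 ⟨k, fun k' hk' => hmono _ hk' hk⟩
    exact ((eventually_all_finite q.1.finite_toSet).2 hev).exists

theorem exists_computable_choice {r : α → β → Prop}
    (hr : REPred fun q : α × β => r q.1 q.2)
    (h : ∀ a, ∃ b, r a b) : ∃ f : α → β, Computable f ∧ ∀ a, r a (f a) := by
  classical
  obtain ⟨T, hT, -, hrT⟩ := hr.exists_primrecRel_stage
  -- `g a m` accepts the candidate coded by `m.unpair.1` if it is confirmed at stage `m.unpair.2`
  let g : α → ℕ → Option β := fun a m => (decode (α := β) m.unpair.1).bind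
    fun b => Option.guard (fun b => decide (T (a, b) m.unpair.2)) b
  have hg : Primrec₂ g := by
    have hguard : PrimrecRel fun (x : (α × ℕ) × β) (b : β) => T (x.1.1, b) x.1.2.unpair.2 :=
      hT.comp ((Primrec.fst.comp (Primrec.fst.comp Primrec.fst)).pair Primrec.snd)
        (Primrec.snd.comp (Primrec.unpair.comp (Primrec.snd.comp (Primrec.fst.comp Primrec.fst))))
    exact Primrec.option_bind
      (Primrec.decode.comp (Primrec.fst.comp (Primrec.unpair.comp Primrec.snd)))
      (Primrec.option_guard hguard Primrec.snd)
  have hmem : ∀ a m b, b ∈ g a m ↔ decode m.unpair.1 = some b ∧ T (a, b) m.unpair.2 :=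
    fun a m b => by simp [g, Option.bind_eq_some_iff, Option.guard_eq_some_iff]
  have hdom : ∀ a, (Nat.rfindOpt (g a)).Dom := fun a => by
    obtain ⟨b, hb⟩ := h a
    obtain ⟨k, hk⟩ := (hrT (a, b)).1 hb
    exact Nat.rfindOpt_dom.2
      ⟨Nat.pair (encode b) k, b, (hmem _ _ _).2 ⟨by simp, by simpa using hk⟩⟩
  refine ⟨fun a => (Nat.rfindOpt (g a)).get (hdom a),
    (Partrec.rfindOpt hg.to_comp).of_eq fun a => (Part.some_get _).symm, fun a => ?_⟩
  obtain ⟨m, hm⟩ := Nat.rfindOpt_spec (Part.get_mem (hdom a))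
  exact (hrT (a, _)).2 ⟨_, ((hmem a m _).1 hm).2⟩

end REPred

section Greedy

variable {α : Type*}

def greedyPrefix (next : List α → α) : ℕ → List α
  | 0 => []
  | n + 1 => greedyPrefix next n ++ [next (greedyPrefix next n)]

theorem next_greedyPrefix_mem {next : List α → α} {i j : ℕ} (hij : i < j) :
    next (greedyPrefix next i) ∈ greedyPrefix next j := by
  induction j with
  | zero => omega
  | succ j ih =>
    rw [greedyPrefix, List.mem_append, List.mem_singleton]
    rcases Nat.lt_succ_iff_lt_or_eq.1 hij with hlt | rfl
    · exact Or.inl (ih hlt)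
    · exact Or.inr rfl

theorem Computable.greedyPrefix [Primcodable α] {next : List α → α} (hnext : Computable next) :
    Computable (greedyPrefix next) := by
  refine (Computable.nat_rec (h := fun _ (p : ℕ × List α) => p.2 ++ [next p.2]) Computable.id
    (Computable.const []) ?_).of_eq fun n => ?_
  · exact Computable.list_concat.comp (Computable.snd.comp Computable.snd)
      (hnext.comp (Computable.snd.comp Computable.snd))
  · induction n with
    | zero => rfl
    | succ n ih => simp only [_root_.greedyPrefix, ← ih]; rfl

end Greedy

/-- If `C` is a Π⁰₁ equivalence relation with infinitely many classes, then `Id ≤ C`. -/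
theorem stmt1 (C : ℕ → ℕ → Prop) (hC : Equivalence C) (hPi : Pi01 C)
    (hInf : InfiniteClasses C) :
    Reduces (fun x y => x = y) C := by
  obtain ⟨next, hnext, hsep⟩ :=
    (REPred.forall_mem_list (r := fun x y => ¬C x y) hPi).exists_computable_choice hInf
  refine ⟨fun n => next (greedyPrefix next n), hnext.comp hnext.greedyPrefix, fun x y => ?_⟩
  refine ⟨fun hxy => hxy ▸ hC.refl _, fun hC_xy => ?_⟩
  by_contra hne
  rcases Nat.lt_or_gt_of_ne hne with hlt | hlt
  · exact hsep _ _ (next_greedyPrefix_mem hlt) (hC.symm hC_xy)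
  · exact hsep _ _ (next_greedyPrefix_mem hlt) hC_xy
end

section
/- If X is a co-ceer-resistant ceer and f is a computable reduction of X ⊕ Y to X ⊕ Y, then the Π⁰₁ equivalence relation ∼ᶠ defined by n ∼ᶠ m iff for all k, f⁽ᵏ⁾(2n) is even ↔ f⁽ᵏ⁾(2m) is even, has only finitely many equivalence classes. -/
/-! The relation `∼ᶠ` is Π⁰₁, since two numbers are separated as soon as some iterate of `f`
sends them to numbers of different parity. Since `f` preserves `X ⊕ Y`, whose classes lie
entirely among the evens or entirely among the odds, `X` refines `∼ᶠ`. If `∼ᶠ` had infinitely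
many classes, co-ceer-resistance would give an `X`-related pair that `∼ᶠ` separates. -/

theorem Computable.nat_iterate {α β : Type*} [Primcodable α] [Primcodable β] {f : α → ℕ}
    {g : α → β} {h : α → β → β} (hf : Computable f) (hg : Computable g) (hh : Computable₂ h) :
    Computable fun a => (h a)^[f a] (g a) :=
  (Computable.nat_rec hf hg (hh.comp Computable.fst (Computable.snd.comp Computable.snd)).to₂).of_eq
    fun a => by induction f a <;> simp [*, Function.iterate_succ_apply']

theorem REPred.exists_nat {α : Type*} [Primcodable α] {p : α → ℕ → Bool} (hp : Computable₂ p) :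
    REPred fun a => ∃ k, p a k :=
  (Partrec.rfind hp.partrec₂).dom_re.of_eq fun _ => Nat.rfind_dom.trans (by simp)

theorem not_finiteClasses_iff {R : ℕ → ℕ → Prop} : ¬ FiniteClasses R ↔ InfiniteClasses R := by
  simp [FiniteClasses, InfiniteClasses]

theorem CoCeerResistant.finiteClasses {X C : ℕ → ℕ → Prop} (hX : CoCeerResistant X)
    (hC : Equivalence C) (hCpi : Pi01 C) (hXC : ∀ x y, X x y → C x y) : FiniteClasses C := by
  by_contra hfin
  obtain ⟨x, y, hxy, hsep⟩ := hX C hC hCpi (not_finiteClasses_iff.1 hfin)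
  exact hsep (hXC x y hxy)

theorem even_iff_of_join {R S : ℕ → ℕ → Prop} {a b : ℕ} (h : join R S a b) :
    Even a ↔ Even b := by
  rcases h with ⟨x, y, rfl, rfl, -⟩ | ⟨x, y, rfl, rfl, -⟩ <;> simp

theorem rel_iterate {R : ℕ → ℕ → Prop} {f : ℕ → ℕ} (hf : ∀ ⦃x y⦄, R x y → R (f x) (f y))
    (k : ℕ) {a b : ℕ} (h : R a b) : R (f^[k] a) (f^[k] b) := by
  induction k with
  | zero => exact h
  | succ k ih => simpa only [Function.iterate_succ_apply'] using hf ih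

theorem simF_equivalence (f : ℕ → ℕ) : Equivalence (simF f) :=
  ⟨fun _ _ => Iff.rfl, fun h k => (h k).symm, fun h h' k => (h k).trans (h' k)⟩

section simF

variable {f : ℕ → ℕ}

theorem not_simF_iff {n m : ℕ} :
    ¬ simF f n m ↔ ∃ k, f^[k] (2 * n) % 2 != f^[k] (2 * m) % 2 := by
  simp only [simF, not_forall, Nat.even_iff, bne_iff_ne]
  exact exists_congr fun _ => by omega

theorem pi01_simF (hf : Computable f) : Pi01 (simF f) := by
  have hparity {i : ℕ × ℕ → ℕ} (hi : Computable i) :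
      Computable fun q : (ℕ × ℕ) × ℕ => f^[q.2] (2 * i q.1) % 2 :=
    Primrec.nat_mod.to_comp.comp
      (Computable.nat_iterate Computable.snd
        (Primrec.nat_mul.to_comp.comp (Computable.const 2) (hi.comp Computable.fst))
        (hf.comp Computable.snd).to₂)
      (Computable.const 2)
  have hsep : Computable₂ fun (p : ℕ × ℕ) k => f^[k] (2 * p.1) % 2 != f^[k] (2 * p.2) % 2 :=
    (Primrec.not.to_comp.comp
      (Primrec.beq.to_comp.comp (hparity Computable.fst) (hparity Computable.snd))).to₂
  exact (REPred.exists_nat hsep).of_eq fun _ => not_simF_iff.symm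

theorem simF_of_join_left {X Y : ℕ → ℕ → Prop} (hf : ∀ ⦃a b⦄, join X Y a b → join X Y (f a) (f b))
    {n m : ℕ} (h : X n m) : simF f n m :=
  fun k => even_iff_of_join (rel_iterate hf k (Or.inl ⟨n, m, rfl, rfl, h⟩))

end simF

theorem stmt3_general (X Y : ℕ → ℕ → Prop)
    (hccr : CoCeerResistant X) (f : ℕ → ℕ)
    (hf : CReduction f (join X Y) (join X Y)) :
    FiniteClasses (simF f) :=
  hccr.finiteClasses (simF_equivalence f) (pi01_simF hf.1)
    fun _ _ => simF_of_join_left fun a b => (hf.2 a b).1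

/-- If `X` is a co-ceer-resistant ceer and `f` reduces `X ⊕ Y` to itself, then `∼ᶠ`
has only finitely many classes. -/
theorem stmt3 (X Y : ℕ → ℕ → Prop) (hX : Ceer X) (hY : Ceer Y)
    (hccr : CoCeerResistant X) (f : ℕ → ℕ)
    (hf : CReduction f (join X Y) (join X Y)) :
    FiniteClasses (simF f) :=
  stmt3_general X Y hccr f hf
end

section
/- Let f : X ⊕ Y → X ⊕ Y be a computable reduction and define ∼ᶠ by n ∼ᶠ m iff for all k, f⁽ᵏ⁾(2n) is even ↔ f⁽ᵏ⁾(2m) is even. If ∼ᶠ has only finitely many equivalence classes, then every ∼ᶠ-class, viewed as an infinite sequence τ ∈ {X,Y}^ω where τ(k) records the parity of f⁽ᵏ⁾(2n), is eventually periodic. -/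
/-!
Write `τ a k` for the parity of `f^[k] a`. Whenever `f^[k] (2 * n) = 2 * m`, the tail of `τ (2 * n)`
from position `k` is `τ (2 * m)`. If the orbit of `2 * n` is eventually odd, `τ (2 * n)` is
eventually constant. Otherwise it visits even numbers infinitely often, and since the sequences
`τ (2 * m)` take only finitely many values, two of these tails coincide, at positions `i < j`;
then `τ (2 * n)` is periodic with period `j - i` from `i` on.
-/

lemma Nat.bodd_eq_not_decide_even (n : ℕ) : n.bodd = !decide (Even n) := by
  rcases Nat.even_or_odd' n with ⟨m, rfl | rfl⟩ <;> simp [parity_simps]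

namespace EventuallyPeriodic

lemma of_shift_eq {τ : ℕ → Bool} {i j : ℕ} (hij : i < j) (h : ∀ t, τ (t + i) = τ (t + j)) :
    EventuallyPeriodic τ := by
  refine ⟨i, j - i, Nat.sub_pos_of_lt hij, fun k hk => ?_⟩
  have hshift : k - i + j = k + (j - i) := by omega
  have := h (k - i)
  rwa [Nat.sub_add_cancel hk, hshift, eq_comm] at this

lemma of_eventually_const {τ : ℕ → Bool} {N : ℕ} {b : Bool} (h : ∀ k, N ≤ k → τ k = b) :
    EventuallyPeriodic τ :=
  of_shift_eq (Nat.lt_succ_self N) fun t => by rw [h _ (by omega), h _ (by omega)]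

lemma of_infinite_of_finite_tails {τ : ℕ → Bool} {S : Set ℕ} (hS : S.Infinite)
    (htails : ((fun k t => τ (t + k)) '' S).Finite) : EventuallyPeriodic τ := by
  obtain ⟨i, -, j, -, hne, heq⟩ := hS.exists_ne_map_eq_of_mapsTo (Set.mapsTo_image _ S) htails
  rcases hne.lt_or_gt with hij | hji
  · exact of_shift_eq hij (congrFun heq)
  · exact of_shift_eq hji fun t => (congrFun heq t).symm

end EventuallyPeriodic

def parityTrace (f : ℕ → ℕ) (a : ℕ) : ℕ → Bool := fun k => (f^[k] a).bodd

lemma parityTrace_add (f : ℕ → ℕ) (a k : ℕ) :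
    (fun t => parityTrace f a (t + k)) = parityTrace f (f^[k] a) := by
  ext t
  simp only [parityTrace, Function.iterate_add_apply]

lemma simF_iff_parityTrace_eq (f : ℕ → ℕ) (n m : ℕ) :
    simF f n m ↔ parityTrace f (2 * n) = parityTrace f (2 * m) := by
  simp only [simF, funext_iff, parityTrace, Nat.bodd_eq_not_decide_even, Bool.not_inj_iff,
    decide_eq_decide]

lemma FiniteClasses.finite_range_parityTrace {f : ℕ → ℕ} (h : FiniteClasses (simF f)) :
    (Set.range fun m => parityTrace f (2 * m)).Finite := by
  obtain ⟨l, hl⟩ := h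
  refine (l.toFinset.finite_toSet.image fun m => parityTrace f (2 * m)).subset ?_
  rintro _ ⟨x, rfl⟩
  obtain ⟨y, hy, hxy⟩ := hl x
  exact ⟨y, List.mem_toFinset.mpr hy, ((simF_iff_parityTrace_eq f x y).mp hxy).symm⟩

theorem stmt4_general (f : ℕ → ℕ)
    (hfin : FiniteClasses (simF f)) :
    ∀ n, EventuallyPeriodic (fun k => (f^[k] (2*n)).bodd) := by
  intro n
  change EventuallyPeriodic (parityTrace f (2 * n))
  by_cases hS : {k | Even (f^[k] (2 * n))}.Infinite
  · refine EventuallyPeriodic.of_infinite_of_finite_tails hS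
      (hfin.finite_range_parityTrace.subset ?_)
    rintro _ ⟨k, ⟨m, hm⟩, rfl⟩
    refine ⟨m, ?_⟩
    change parityTrace f (2 * m) = fun t => parityTrace f (2 * n) (t + k)
    rw [parityTrace_add, hm, two_mul]
  · obtain ⟨N, hN⟩ := (Set.not_infinite.mp hS).bddAbove
    refine EventuallyPeriodic.of_eventually_const (N := N + 1) (b := true) fun k hk => ?_
    have hodd : ¬ Even (f^[k] (2 * n)) := fun he => absurd (hN he) (by omega)
    simp [parityTrace, Nat.bodd_eq_not_decide_even, hodd]

/-- If `∼ᶠ` has finitely many classes, every class's parity sequence is eventually periodic. -/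
theorem stmt4 (X Y : ℕ → ℕ → Prop) (hX : Ceer X) (hY : Ceer Y) (f : ℕ → ℕ)
    (hf : CReduction f (join X Y) (join X Y))
    (hfin : FiniteClasses (simF f)) :
    ∀ n, EventuallyPeriodic (fun k => (f^[k] (2*n)).bodd) :=
  stmt4_general f hfin
end

section
/- Every dark ceer is hereditarily self-full: if X is a ceer with infinitely many classes such that Id is not computably reducible to X, then for every self-full ceer Y, X ⊕ Y is self-full. -/
section Iterate

variable {R : ℕ → ℕ → Prop} {f : ℕ → ℕ}

theorem rel_iff_rel_iterate (hf : ∀ x y, R x y ↔ R (f x) (f y)) (n : ℕ) (x y : ℕ) :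
    R x y ↔ R (f^[n] x) (f^[n] y) := by
  induction n with
  | zero => rfl
  | succ n ih =>
    rw [Function.iterate_succ_apply', Function.iterate_succ_apply']
    exact ih.trans (hf _ _)

theorem rel_iterate_of_rel_iterate_add (hf : ∀ x y, R x y ↔ R (f x) (f y)) {n k x y : ℕ}
    (h : R (f^[n] x) (f^[n + k] y)) : R x (f^[k] y) := by
  rw [Function.iterate_add_apply] at h
  exact (rel_iff_rel_iterate hf n _ _).mpr h

end Iterate

section Join

variable {R S : ℕ → ℕ → Prop}

theorem join_symm (hR : Equivalence R) (hS : Equivalence S) {a c : ℕ} :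
    join R S a c → join R S c a := by
  rintro (⟨x, y, rfl, rfl, h⟩ | ⟨x, y, rfl, rfl, h⟩)
  · exact Or.inl ⟨y, x, rfl, rfl, hR.symm h⟩
  · exact Or.inr ⟨y, x, rfl, rfl, hS.symm h⟩

theorem join_mod_two_eq {a c : ℕ} : join R S a c → a % 2 = c % 2 := by
  rintro (⟨x, y, rfl, rfl, -⟩ | ⟨x, y, rfl, rfl, -⟩) <;> omega

theorem join_even_even_iff (x y : ℕ) : join R S (2 * x) (2 * y) ↔ R x y := by
  constructor
  · rintro (⟨x', y', hx, hy, h⟩ | ⟨_, _, hx, _, _⟩)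
    · obtain rfl : x' = x := by omega
      obtain rfl : y' = y := by omega
      exact h
    · omega
  · exact fun h => Or.inl ⟨x, y, rfl, rfl, h⟩

theorem join_odd_odd_iff (x y : ℕ) : join R S (2 * x + 1) (2 * y + 1) ↔ S x y := by
  constructor
  · rintro (⟨_, _, hx, _, _⟩ | ⟨x', y', hx, hy, h⟩)
    · omega
    · obtain rfl : x' = x := by omega
      obtain rfl : y' = y := by omega
      exact h
  · exact fun h => Or.inr ⟨x, y, rfl, rfl, h⟩

end Join

section SelfReduction

variable {R S : ℕ → ℕ → Prop} {f : ℕ → ℕ}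

theorem reduces_id_of_even_orbit (hR : Equivalence R) (hfc : Computable f)
    (hf : ∀ x y, join R S x y ↔ join R S (f x) (f y)) {c : ℕ} (heven : ∀ i, f^[i] c % 2 = 0)
    (hsep : ∀ m, ¬ join R S c (f^[m + 1] c)) : Reduces (fun x y => x = y) R := by
  have hcomputable : Computable fun i => f^[i] c / 2 :=
    Primrec.nat_div.to_comp.comp
      (Computable.nat_iterate Computable.id (Computable.const c) (hfc.comp Computable.snd).to₂)
      (Computable.const 2)
  have hcollapse : ∀ i k, R (f^[i] c / 2) (f^[i + k] c / 2) → k = 0 := by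
    intro i k h
    have hJ : join R S (f^[i] c) (f^[i + k] c) := by
      rw [← Nat.two_mul_div_two_of_even (Nat.even_iff.mpr (heven i)),
        ← Nat.two_mul_div_two_of_even (Nat.even_iff.mpr (heven (i + k)))]
      exact (join_even_even_iff _ _).mpr h
    cases k with
    | zero => rfl
    | succ m => exact absurd (rel_iterate_of_rel_iterate_add hf hJ) (hsep m)
  refine ⟨fun i => f^[i] c / 2, hcomputable, fun i j => ⟨fun h => h ▸ hR.refl _, fun h => ?_⟩⟩
  rcases le_total i j with hij | hij
  · obtain ⟨k, rfl⟩ := Nat.exists_eq_add_of_le hij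
    simp [hcollapse i k h]
  · obtain ⟨k, rfl⟩ := Nat.exists_eq_add_of_le hij
    simp [hcollapse j k (hR.symm h)]

variable (hR : Equivalence R) (hfc : Computable f)
  (hf : ∀ x y, join R S x y ↔ join R S (f x) (f y)) (hdark : ¬ Reduces (fun x y => x = y) R)
include hR hfc hf hdark

theorem exists_odd_return (y : ℕ) : ∃ k, f^[k + 1] (2 * y + 1) % 2 = 1 := by
  by_contra! h
  refine hdark (reduces_id_of_even_orbit hR hfc hf (c := f (2 * y + 1)) (fun i => ?_)
    fun m hJ => ?_)
  · have := h i
    rw [Function.iterate_succ_apply] at this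
    omega
  · rw [← Function.iterate_succ_apply, Function.iterate_succ_apply'] at hJ
    have := join_mod_two_eq ((hf _ _).mpr hJ)
    exact h m (by omega)

theorem exists_odd_iterate_of_forall_not_join (hS : Equivalence S) {b : ℕ}
    (hb : ∀ x, ¬ join R S (f x) b) : ∃ j, f^[j] b % 2 = 1 := by
  by_contra! h
  refine hdark (reduces_id_of_even_orbit hR hfc hf (c := b) (fun i => by have := h i; omega)
    fun m hJ => ?_)
  rw [Function.iterate_succ_apply'] at hJ
  exact hb _ (join_symm hR hS hJ)

end SelfReduction

section OddReturn

variable {R S : ℕ → ℕ → Prop} {f : ℕ → ℕ} (hret : ∀ y, ∃ k, f^[k + 1] (2 * y + 1) % 2 = 1)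

def oddReturnTime (y : ℕ) : ℕ := Nat.find (hret y)

def oddReturnMap (y : ℕ) : ℕ := f^[oddReturnTime hret y + 1] (2 * y + 1) / 2

theorem two_mul_oddReturnMap_add_one (y : ℕ) :
    2 * oddReturnMap hret y + 1 = f^[oddReturnTime hret y + 1] (2 * y + 1) := by
  have := Nat.find_spec (hret y)
  unfold oddReturnMap oddReturnTime
  omega

theorem iterate_mod_two_of_lt_oddReturnTime {y k : ℕ} (hk : k < oddReturnTime hret y) :
    f^[k + 1] (2 * y + 1) % 2 = 0 := by
  have := Nat.find_min (hret y) hk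
  omega

theorem computable_oddReturnMap (hfc : Computable f) : Computable (oddReturnMap hret) := by
  have hodd : Computable fun y : ℕ => 2 * y + 1 :=
    Primrec.succ.to_comp.comp (Primrec.nat_mul.to_comp.comp (Computable.const 2) Computable.id)
  have horbit : Computable fun p : ℕ × ℕ => f^[p.2 + 1] (2 * p.1 + 1) :=
    Computable.nat_iterate (Primrec.succ.to_comp.comp Computable.snd) (hodd.comp Computable.fst)
      (hfc.comp Computable.snd).to₂
  have hpred : ComputablePred fun p : ℕ × ℕ => f^[p.2 + 1] (2 * p.1 + 1) % 2 = 1 :=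
    ⟨inferInstance, Primrec.eq.decide.to_comp.comp
      (Primrec.nat_mod.to_comp.comp horbit (Computable.const 2)) (Computable.const 1)⟩
  have hreturn : Computable (oddReturnTime hret) := Computable.find hpred hret
  exact Primrec.nat_div.to_comp.comp
    (Computable.nat_iterate (Primrec.succ.to_comp.comp hreturn) hodd
      (hfc.comp Computable.snd).to₂)
    (Computable.const 2)

variable {hret} (hf : ∀ x y, join R S x y ↔ join R S (f x) (f y))
include hf

theorem oddReturnTime_eq_of_rel (hS : Equivalence S) {y y' : ℕ} (h : S y y') :
    oddReturnTime hret y = oddReturnTime hret y' := by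
  have hle : ∀ {z z'}, S z z' → oddReturnTime hret z ≤ oddReturnTime hret z' := by
    intro z z' hzz'
    refine Nat.find_min' (hret z) ?_
    have hsync := join_mod_two_eq <| (rel_iff_rel_iterate hf (oddReturnTime hret z' + 1) _ _).mp
      ((join_odd_odd_iff _ _).mpr hzz')
    exact hsync.trans (Nat.find_spec (hret z'))
  exact le_antisymm (hle h) (hle (hS.symm h))

theorem rel_of_join_oddReturn {z z' : ℕ} (hle : oddReturnTime hret z ≤ oddReturnTime hret z')
    (h : join R S (f^[oddReturnTime hret z + 1] (2 * z + 1))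
      (f^[oddReturnTime hret z' + 1] (2 * z' + 1))) : S z z' := by
  obtain ⟨k, hk⟩ := Nat.exists_eq_add_of_le hle
  rw [hk, Nat.add_right_comm] at h
  have hJ := rel_iterate_of_rel_iterate_add hf h
  cases k with
  | zero => exact (join_odd_odd_iff _ _).mp hJ
  | succ j =>
    have := iterate_mod_two_of_lt_oddReturnTime hret (y := z') (k := j) (by omega)
    have := join_mod_two_eq hJ
    omega

theorem creduction_oddReturnMap (hR : Equivalence R) (hS : Equivalence S) (hfc : Computable f) :
    CReduction (oddReturnMap hret) S S := by
  refine ⟨computable_oddReturnMap hret hfc, fun y y' => ⟨fun h => ?_, fun h => ?_⟩⟩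
  · rw [← join_odd_odd_iff (R := R) (S := S), two_mul_oddReturnMap_add_one,
      two_mul_oddReturnMap_add_one, oddReturnTime_eq_of_rel hf hS h]
    exact (rel_iff_rel_iterate hf _ _ _).mp ((join_odd_odd_iff _ _).mpr h)
  · rw [← join_odd_odd_iff (R := R) (S := S), two_mul_oddReturnMap_add_one,
      two_mul_oddReturnMap_add_one] at h
    rcases le_total (oddReturnTime hret y) (oddReturnTime hret y') with hle | hle
    · exact rel_of_join_oddReturn hf hle h
    · exact hS.symm (rel_of_join_oddReturn hf hle (join_symm hR hS h))

theorem not_rel_oddReturnMap (hR : Equivalence R) (hS : Equivalence S) {b t : ℕ}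
    (hb : ∀ x, ¬ join R S (f x) b) (ht : f^[t] b % 2 = 1) (hmin : ∀ i < t, f^[i] b % 2 ≠ 1)
    (x : ℕ) : ¬ S (oddReturnMap hret x) (f^[t] b / 2) := by
  intro h
  have hJ : join R S (f^[oddReturnTime hret x + 1] (2 * x + 1)) (f^[t] b) := by
    rw [← two_mul_oddReturnMap_add_one, ← Nat.div_add_mod (f^[t] b) 2, ht]
    exact (join_odd_odd_iff _ _).mpr h
  rcases le_or_gt (oddReturnTime hret x + 1) t with hle | hlt
  · obtain ⟨k, rfl⟩ := Nat.exists_eq_add_of_le hle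
    have := join_mod_two_eq (rel_iterate_of_rel_iterate_add hf hJ)
    have := hmin k (by omega)
    omega
  · obtain ⟨k, hk⟩ := Nat.exists_eq_add_of_lt hlt
    rw [hk] at hJ
    have hJ' : join R S b (f^[k + 1] (2 * x + 1)) :=
      rel_iterate_of_rel_iterate_add hf (join_symm hR hS hJ)
    rw [Function.iterate_succ_apply'] at hJ'
    exact hb _ (join_symm hR hS hJ')

end OddReturn

theorem stmt6_general (X : ℕ → ℕ → Prop) (hX : Ceer X)
    (hdark : ¬ Reduces (fun x y => x = y) X) :
    ∀ Y : ℕ → ℕ → Prop, Ceer Y → SelfFull Y → SelfFull (join X Y) := by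
  intro Y hY hYself f ⟨hfc, hf⟩ b
  by_contra! hb
  have hret := exists_odd_return hX.1 hfc hf hdark
  have hodd := exists_odd_iterate_of_forall_not_join hX.1 hfc hf hdark hY.1 hb
  obtain ⟨x, hx⟩ := hYself _ (creduction_oddReturnMap hf hX.1 hY.1 hfc (hret := hret))
    (f^[Nat.find hodd] b / 2)
  exact not_rel_oddReturnMap hf hX.1 hY.1 hb (Nat.find_spec hodd)
    (fun _ => Nat.find_min hodd) x hx

/-- Every dark ceer is hereditarily self-full. -/
theorem stmt6 (X : ℕ → ℕ → Prop) (hX : Ceer X) (hInf : InfiniteClasses X)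
    (hdark : ¬ Reduces (fun x y => x = y) X) :
    ∀ Y : ℕ → ℕ → Prop, Ceer Y → SelfFull Y → SelfFull (join X Y) :=
  stmt6_general X hX hdark
end

section
/- Suppose X and Y are ceers with X self-full, and f₂ : X ⊕ Y → X ⊕ Y is a computable reduction such that the set C_X = {2n : f₂⁽ᵏ⁾(2n) is even for all k} and C_Y = {2n : f₂⁽ᵏ⁾(2n) is odd for all k ≥ 1} partition the even numbers and are both decidable and X⊕Y-closed. Then the range of f₂ restricted to C_X intersects every X⊕Y-class contained in C_X, and no odd number is mapped by f₂ into C_X. -/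
/-!
Halving `f₂` on `C_X` gives a computable map `h` on `A = {n | 2n ∈ C_X}` which reduces `X` to
itself there, because `f₂` maps `C_X` into even numbers of `C_X`. Since `A` is decidable and
`X`-closed, extending `h` by the identity off `A` yields a computable self-reduction of `X`, and
self-fullness makes its range meet every class; a class inside `A` can only be hit from `A`.
An odd `2m + 1` with `f₂ (2m + 1) ∈ C_X` would then be `X ⊕ Y`-equivalent to an even number.
-/

section Join

variable {R S : ℕ → ℕ → Prop} {n m : ℕ}

theorem join_two_mul_two_mul : join R S (2 * n) (2 * m) ↔ R n m := by
  constructor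
  · rintro (⟨x, y, hx, hy, h⟩ | ⟨x, y, hx, hy, -⟩)
    · obtain rfl : n = x := by omega
      obtain rfl : m = y := by omega
      exact h
    · omega
  · exact fun h => Or.inl ⟨n, m, rfl, rfl, h⟩

theorem not_join_two_mul_two_mul_add_one : ¬ join R S (2 * n) (2 * m + 1) := by
  rintro (⟨x, y, hx, hy, -⟩ | ⟨x, y, hx, hy, -⟩) <;> omega

end Join

theorem SelfFull.exists_rel_apply_of_mapsTo {R : ℕ → ℕ → Prop} (hR : Equivalence R)
    (hsf : SelfFull R) {A : Set ℕ} (hA : ComputablePred (· ∈ A))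
    (hAR : ∀ a b, R a b → a ∈ A → b ∈ A) {h : ℕ → ℕ} (hh : Computable h)
    (hmaps : Set.MapsTo h A A) (hred : ∀ a ∈ A, ∀ b ∈ A, R a b ↔ R (h a) (h b))
    {y : ℕ} (hy : y ∈ A) : ∃ x ∈ A, R (h x) y := by
  classical
  have hsep : ∀ {a b}, a ∈ A → b ∉ A → ¬ R a b ∧ ¬ R b a := fun ha hb =>
    ⟨fun hab => hb (hAR _ _ hab ha), fun hba => hb (hAR _ _ (hR.symm hba) ha)⟩
  let g : ℕ → ℕ := fun n => if n ∈ A then h n else n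
  have hg : CReduction g R R := by
    refine ⟨ComputablePred.ite hh Computable.id hA, fun a b => ?_⟩
    by_cases ha : a ∈ A <;> by_cases hb : b ∈ A <;> simp only [g, ha, hb, if_true, if_false]
    · exact hred a ha b hb
    · exact iff_of_false (hsep ha hb).1 (hsep (hmaps ha) hb).1
    · exact iff_of_false (hsep hb ha).2 (hsep (hmaps hb) ha).2
  obtain ⟨x, hx⟩ := hsf g hg y
  by_cases hxA : x ∈ A
  · exact ⟨x, hxA, by simpa only [g, hxA, if_true] using hx⟩
  · simp only [g, hxA, if_false] at hx
    exact absurd hx (hsep hy hxA).2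

/-- The paper's `C_X`; the `k = 0` instance makes its elements even. -/
def evenOrbitSet (f : ℕ → ℕ) : Set ℕ := {a | ∀ k, Even (f^[k] a)}

namespace evenOrbitSet

variable {f : ℕ → ℕ} {a : ℕ}

theorem setOf_two_mul_eq (f : ℕ → ℕ) :
    {a | ∃ n, a = 2 * n ∧ ∀ k, Even (f^[k] (2 * n))} = evenOrbitSet f := by
  ext a
  refine ⟨?_, fun ha => ?_⟩
  · rintro ⟨n, rfl, hn⟩
    exact hn
  · obtain ⟨n, rfl⟩ := (ha 0).two_dvd
    exact ⟨n, rfl, ha⟩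

theorem even (ha : a ∈ evenOrbitSet f) : Even a := ha 0

theorem apply_mem (ha : a ∈ evenOrbitSet f) : f a ∈ evenOrbitSet f := fun k => by
  simpa only [Function.iterate_succ_apply] using ha (k + 1)

theorem two_mul_half_apply (ha : a ∈ evenOrbitSet f) : 2 * (f a / 2) = f a :=
  Nat.two_mul_div_two_of_even (even (apply_mem ha))

end evenOrbitSet

open evenOrbitSet in
theorem exists_mem_evenOrbitSet_join_apply {X Y : ℕ → ℕ → Prop} (hX : Equivalence X)
    (hsf : SelfFull X) {f : ℕ → ℕ} (hf : CReduction f (join X Y) (join X Y))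
    (hdec : ComputablePred (· ∈ evenOrbitSet f))
    (hcl : ∀ a b, join X Y a b → a ∈ evenOrbitSet f → b ∈ evenOrbitSet f)
    {a : ℕ} (ha : a ∈ evenOrbitSet f) : ∃ b ∈ evenOrbitSet f, join X Y (f b) a := by
  let A : Set ℕ := {n | 2 * n ∈ evenOrbitSet f}
  let h : ℕ → ℕ := fun n => f (2 * n) / 2
  have hmul : Computable fun n : ℕ => 2 * n :=
    (Primrec.nat_mul.comp (Primrec.const 2) Primrec.id).to_comp
  have hA : ComputablePred (· ∈ A) :=
    ComputablePred.computable_of_manyOneReducible ⟨_, hmul, fun _ => Iff.rfl⟩ hdec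
  have hh : Computable h :=
    Primrec.nat_div.to_comp.comp (hf.1.comp hmul) (Computable.const 2)
  have hAX : ∀ n m, X n m → n ∈ A → m ∈ A := fun n m hnm hn =>
    hcl _ _ (join_two_mul_two_mul.2 hnm) hn
  have hmaps : Set.MapsTo h A A := fun n hn => by
    show 2 * h n ∈ evenOrbitSet f
    simpa only [h, two_mul_half_apply hn] using apply_mem hn
  have hred : ∀ n ∈ A, ∀ m ∈ A, X n m ↔ X (h n) (h m) := fun n hn m hm => by
    rw [← join_two_mul_two_mul (R := X) (S := Y), hf.2, ← two_mul_half_apply hn,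
      ← two_mul_half_apply hm, join_two_mul_two_mul]
  obtain ⟨n, rfl⟩ := (even ha).two_dvd
  obtain ⟨x, hx, hxn⟩ :=
    hsf.exists_rel_apply_of_mapsTo hX hA hAX hh hmaps hred (y := n) ha
  refine ⟨2 * x, hx, ?_⟩
  rw [← two_mul_half_apply hx]
  exact join_two_mul_two_mul.2 hxn

theorem stmt12_general (X Y : ℕ → ℕ → Prop) (hX : Ceer X) (hsf : SelfFull X)
    (f₂ : ℕ → ℕ) (hf : CReduction f₂ (join X Y) (join X Y))
    (CX : Set ℕ)
    (hCX : CX = {a | ∃ n, a = 2*n ∧ ∀ k, Even (f₂^[k] (2*n))})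
    (hdecX : ComputablePred (· ∈ CX))
    (hclX : ∀ a b, join X Y a b → a ∈ CX → b ∈ CX) :
    (∀ a ∈ CX, ∃ b ∈ CX, join X Y (f₂ b) a) ∧ (∀ m, f₂ (2*m+1) ∉ CX) := by
  rw [evenOrbitSet.setOf_two_mul_eq] at hCX
  subst hCX
  have hrange : ∀ a ∈ evenOrbitSet f₂, ∃ b ∈ evenOrbitSet f₂, join X Y (f₂ b) a :=
    fun a ha => exists_mem_evenOrbitSet_join_apply hX.1 hsf hf hdecX hclX ha
  refine ⟨hrange, fun m hm => ?_⟩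
  obtain ⟨b, hb, hjoin⟩ := hrange _ hm
  obtain ⟨n, rfl⟩ := (evenOrbitSet.even hb).two_dvd
  exact not_join_two_mul_two_mul_add_one ((hf.2 _ _).2 hjoin)

/-- Lemma "Cx": the range of `f₂` restricted to `C_X` meets every class of `C_X`,
and no odd number maps into `C_X`. -/
theorem stmt12 (X Y : ℕ → ℕ → Prop) (hX : Ceer X) (hY : Ceer Y) (hsf : SelfFull X)
    (f₂ : ℕ → ℕ) (hf : CReduction f₂ (join X Y) (join X Y))
    (CX CY : Set ℕ)
    (hCX : CX = {a | ∃ n, a = 2*n ∧ ∀ k, Even (f₂^[k] (2*n))})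
    (hCY : CY = {a | ∃ n, a = 2*n ∧ ∀ k, 1 ≤ k → ¬ Even (f₂^[k] (2*n))})
    (hcover : ∀ n, 2*n ∈ CX ∨ 2*n ∈ CY) (hdisj : Disjoint CX CY)
    (hdecX : ComputablePred (· ∈ CX)) (hdecY : ComputablePred (· ∈ CY))
    (hclX : ∀ a b, join X Y a b → a ∈ CX → b ∈ CX)
    (hclY : ∀ a b, join X Y a b → a ∈ CY → b ∈ CY) :
    (∀ a ∈ CX, ∃ b ∈ CX, join X Y (f₂ b) a) ∧ (∀ m, f₂ (2*m+1) ∉ CX) :=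
  stmt12_general X Y hX hsf f₂ hf CX hCX hdecX hclX
end

section
/- If R and S are ceers, f : R → S is a computable reduction, and the range of f intersects every S-equivalence class, then S ≤ R; consequently R and S are computably bi-reducible. -/
/-! The inverse reduction is found by search: since `S` is c.e., given `s` one can enumerate
pairs `(x, k)` until `S (f x) s` is confirmed within `k` steps, and the surjectivity assumption
guarantees the search halts. Any such choice `g s` is a reduction `S → R`, because
`f (g s)` is `S`-equivalent to `s`. -/

open Encodable Nat.Partrec

theorem REPred.comp {α β : Type*} [Primcodable α] [Primcodable β] {p : β → Prop}
    (hp : REPred p) {g : α → β} (hg : Computable g) : REPred fun a => p (g a) :=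
  Partrec.comp hp hg

theorem REPred.exists_computable_stage {α : Type*} [Primcodable α] {p : α → Prop}
    (hp : REPred p) :
    ∃ t : α → ℕ → Bool, Computable₂ t ∧ ∀ a, p a ↔ ∃ k, t a k = true := by
  obtain ⟨c, hc⟩ := Code.exists_code.1 hp
  refine ⟨fun a k => (c.evaln k (encode a)).isSome,
    Primrec.option_isSome.to_comp.comp <| Code.primrec_evaln.to_comp.comp <|
      (Computable.snd.pair (Computable.const c)).pair (Computable.encode.comp Computable.fst),
    fun a => ?_⟩
  have hdom : p a ↔ (c.eval (encode a)).Dom := by simp [hc, encodek, Part.assert]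
  simp only [hdom, Part.dom_iff_mem, Code.evaln_complete, Option.isSome_iff_exists,
    Option.mem_def]
  exact exists_comm

theorem REPred.exists_computable_choice_s19 {α β : Type*} [Primcodable α] [Primcodable β]
    {P : α → β → Prop} (hP : REPred fun x : α × β => P x.1 x.2) (htot : ∀ a, ∃ b, P a b) :
    ∃ g : α → β, Computable g ∧ ∀ a, P a (g a) := by
  obtain ⟨t, ht, hPt⟩ := hP.exists_computable_stage
  let search (a : α) (n : ℕ) : Option β :=
    (decode n.unpair.1).bind fun b => bif t (a, b) n.unpair.2 then some b else none
  have hsearch : Computable₂ search :=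
    (Computable.decode.comp
      (Computable.fst.comp (Computable.unpair.comp Computable.snd))).option_bind
      (Computable.cond (ht.comp ((Computable.fst.comp Computable.fst).pair Computable.snd)
        (Computable.snd.comp (Computable.unpair.comp (Computable.snd.comp Computable.fst))))
        (Computable.option_some.comp Computable.snd) (Computable.const none)).to₂
  have hdom : ∀ a, (Nat.rfindOpt (search a)).Dom := by
    intro a
    obtain ⟨b, hb⟩ := htot a
    obtain ⟨k, hk⟩ := (hPt (a, b)).1 hb
    exact Nat.rfindOpt_dom.2 ⟨Nat.pair (encode b) k, b, by simp [search, encodek, hk]⟩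
  refine ⟨fun a => (Nat.rfindOpt (search a)).get (hdom a),
    (Partrec.rfindOpt hsearch).of_eq_tot fun a => Part.get_mem _, fun a => ?_⟩
  obtain ⟨n, hn⟩ := Nat.rfindOpt_spec (Part.get_mem (hdom a))
  simp only [search, Option.mem_def, Option.bind_eq_some_iff] at hn
  obtain ⟨b, -, hb⟩ := hn
  cases hk : t (a, b) n.unpair.2
  · simp [hk] at hb
  · simp only [hk, cond_true, Option.some.injEq] at hb
    exact (congrArg (P a) hb).mp ((hPt (a, b)).2 ⟨_, hk⟩)

theorem CReduction.of_section {R S : ℕ → ℕ → Prop} (hS : Equivalence S) {f g : ℕ → ℕ}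
    (hf : CReduction f R S) (hg : Computable g) (hfg : ∀ s, S (f (g s)) s) :
    CReduction g S R := by
  refine ⟨hg, fun x y => ?_⟩
  rw [hf.2]
  exact ⟨fun h => hS.trans (hfg x) (hS.trans h (hS.symm (hfg y))),
    fun h => hS.trans (hS.symm (hfg x)) (hS.trans h (hfg y))⟩

theorem stmt19_general (R S : ℕ → ℕ → Prop) (hS : Ceer S) (f : ℕ → ℕ)
    (hf : CReduction f R S) (honto : ∀ s, ∃ x, S (f x) s) :
    Reduces S R ∧ (Reduces R S ∧ Reduces S R) := by
  have hpre : REPred fun p : ℕ × ℕ => S (f p.2) p.1 :=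
    hS.2.comp ((hf.1.comp Computable.snd).pair Computable.fst)
  obtain ⟨g, hg, hfg⟩ := hpre.exists_computable_choice_s19 honto
  have hSR : Reduces S R := ⟨g, hf.of_section hS.1 hg hfg⟩
  exact ⟨hSR, ⟨f, hf⟩, hSR⟩

/-- If a reduction `f : R → S` between ceers hits every `S`-class, then `S ≤ R`;
hence `R` and `S` are bi-reducible. -/
theorem stmt19 (R S : ℕ → ℕ → Prop) (hR : Ceer R) (hS : Ceer S) (f : ℕ → ℕ)
    (hf : CReduction f R S) (honto : ∀ s, ∃ x, S (f x) s) :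
    Reduces S R ∧ (Reduces R S ∧ Reduces S R) :=
  stmt19_general R S hS f hf honto
end
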